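/- arXiv:2101.10008 — 2 statements merged into one kernel-verified Lean document; each statement's English description precedes it below -/
import Mathlib

section
/- The SEA-BREW Decrypt primitive is correct (equation (16)): for all α, r, s, β in ZMod p with β ≠ 0 and every message M in H, writing the ciphertext components as C̃ = M + (α*s) • e(g)(g) and C = (s*β) • g, the decryption-key component as D = (β⁻¹*(α+r)) • g, and the DecryptNode output as A = (r*s) • e(g)(g), one has C̃ − (e(C)(D) − A) = M. -/
theorem LinearMap.map_mul_smul_inv_mul_smul {K M P : Type*} [Field K]
    [AddCommMonoid M] [AddCommMonoid P] [Module K M] [Module K P]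
    (e : M →ₗ[K] M →ₗ[K] P) (x y : M) {β : K} (hβ : β ≠ 0) (s t : K) :
    e ((s * β) • x) ((β⁻¹ * t) • y) = (s * t) • e x y := by
  have hcancel : β⁻¹ * t * (s * β) = s * t := by field_simp
  rw [map_smul, LinearMap.map_smul₂, smul_smul, hcancel]

theorem seabrew_decrypt_correct
    (p : ℕ) [Fact p.Prime]
    (G H : Type*) [AddCommGroup G] [AddCommGroup H]
    [Module (ZMod p) G] [Module (ZMod p) H]
    (e : G →ₗ[ZMod p] G →ₗ[ZMod p] H) (g : G)
    (α r s β : ZMod p) (hβ : β ≠ 0) (M : H) :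
    (M + (α * s) • e g g) -
      (e ((s * β) • g) ((β⁻¹ * (α + r)) • g) - (r * s) • e g g) = M := by
  rw [e.map_mul_smul_inv_mul_smul g g hβ]
  module
end

section
/- SEA-BREW decryption remains correct after a revocation, i.e., a non-revoked consumer whose key was updated can decrypt a re-encrypted ciphertext: for all α, r, s, β₁, β₂ in ZMod p with β₁ ≠ 0 and β₂ ≠ 0, and every message M in H, writing the re-encrypted ciphertext component as C' = (β₂ * β₁⁻¹) • ((s * β₁) • g), the updated decryption-key field as D' = (β₁ * β₂⁻¹) • ((β₁⁻¹ * (α + r)) • g), C̃ = M + (α*s) • e(g)(g), and A = (r*s) • e(g)(g), one has C̃ − (e(C')(D') − A) = M. -/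
/-! Re-encryption turns `g^{sβ₁}` into `g^{sβ₂}` and the key update turns `g^{(α+r)/β₁}` into
`g^{(α+r)/β₂}`, so after a revocation ciphertext and key are exactly those of a fresh encryption
under the master secret `β₂`, and decryption is correct by bilinearity:
`e(g^{sβ₂}, g^{(α+r)/β₂}) = e(g,g)^{s(α+r)}`. -/

section Exponents

variable {K : Type*} [Field K] {β₁ : K}

theorem reencrypt_exponent (hβ₁ : β₁ ≠ 0) (β₂ s : K) : β₂ * β₁⁻¹ * (s * β₁) = s * β₂ := by
  field_simp

theorem updateKey_exponent (hβ₁ : β₁ ≠ 0) (β₂ t : K) : β₁ * β₂⁻¹ * (β₁⁻¹ * t) = β₂⁻¹ * t := by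
  field_simp

end Exponents

theorem LinearMap.map_smul_smul₂ {R M N P : Type*} [CommSemiring R] [AddCommMonoid M]
    [AddCommMonoid N] [AddCommMonoid P] [Module R M] [Module R N] [Module R P]
    (e : M →ₗ[R] N →ₗ[R] P) (a b : R) (x : M) (y : N) :
    e (a • x) (b • y) = (a * b) • e x y := by
  rw [map_smul₂, map_smul, smul_smul]

theorem decrypt_fresh_correct {K G H : Type*} [Field K] [AddCommGroup G] [AddCommGroup H]
    [Module K G] [Module K H] (e : G →ₗ[K] G →ₗ[K] H) (g : G)
    (α r s β : K) (hβ : β ≠ 0) (M : H) :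
    (M + (α * s) • e g g) - (e ((s * β) • g) ((β⁻¹ * (α + r)) • g) - (r * s) • e g g) = M := by
  have hpair : e ((s * β) • g) ((β⁻¹ * (α + r)) • g) = (α * s + r * s) • e g g := by
    rw [e.map_smul_smul₂]
    congr 1
    field_simp
  rw [hpair, add_smul]
  abel

theorem seabrew_decrypt_after_revocation_correct
    (p : ℕ) [Fact p.Prime]
    (G H : Type*) [AddCommGroup G] [AddCommGroup H]
    [Module (ZMod p) G] [Module (ZMod p) H]
    (e : G →ₗ[ZMod p] G →ₗ[ZMod p] H) (g : G)
    (α r s β₁ β₂ : ZMod p) (hβ₁ : β₁ ≠ 0) (hβ₂ : β₂ ≠ 0) (M : H) :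
    (M + (α * s) • e g g) -
      (e ((β₂ * β₁⁻¹) • ((s * β₁) • g)) ((β₁ * β₂⁻¹) • ((β₁⁻¹ * (α + r)) • g))
        - (r * s) • e g g) = M := by
  rw [smul_smul, smul_smul, reencrypt_exponent hβ₁, updateKey_exponent hβ₁]
  exact decrypt_fresh_correct e g α r s β₂ hβ₂ M
end
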